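/- Let k > 1 and let Π be a finite subset of the unit circle Ω containing at least one non-antipodal point (a point α ∈ Π with −α ∉ Π). Then the following are equivalent: (a) there exists β ∈ Ω \ Π such that Π ∪ {β} is k-regular; (b) there exists a non-antipodal point γ ∈ Π such that Π \ {γ} is (k−1)-regular. -/

import Mathlib

open scoped Classical
open Matrix

noncomputable section

/-- The rank-`k` numerical range of a matrix `A`. -/
def rankNumRange (n k : ℕ) (A : Matrix (Fin n) (Fin n) ℂ) : Set ℂ :=
  {lam : ℂ | ∃ P : Matrix (Fin n) (Fin n) ℂ,
    P.IsHermitian ∧ P * P = P ∧ P.rank = k ∧ P * A * P = lam • P}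

/-- The left closed half plane determined by the directed line through `a` and `b`. -/
def halfPlane (a b : ℂ) : Set ℂ :=
  {z : ℂ | 0 ≤ (((starRingEnd ℂ) b - (starRingEnd ℂ) a) * (z - a)).im}

/-- The left open half plane determined by the directed line through `a` and `b`. -/
def openHalfPlane (a b : ℂ) : Set ℂ :=
  {z : ℂ | 0 < (((starRingEnd ℂ) b - (starRingEnd ℂ) a) * (z - a)).im}

/-- The number of eigenvalues of `A`, counted with (algebraic) multiplicity,
lying in the set `s`. -/
def eigCountIn {n : ℕ} (A : Matrix (Fin n) (Fin n) ℂ) (s : Set ℂ) : ℕ :=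
  Multiset.card (A.charpoly.roots.filter (fun z => z ∈ s))

/-- The closed half plane `𝓗(d, ξ)`. -/
def cH (d ξ : ℝ) : Set ℂ :=
  {μ : ℂ | (Complex.exp (-(ξ : ℂ) * Complex.I) * μ).re ≤ d}

/-- The line `𝓛(d, ξ)`. -/
def cL (d ξ : ℝ) : Set ℂ :=
  {μ : ℂ | (Complex.exp (-(ξ : ℂ) * Complex.I) * μ).re = d}

/-- The open semicircular arc of the unit circle starting at `β`
(traversed counterclockwise), without endpoints. -/
def openSemicircle (β : ℂ) : Set ℂ :=
  {z : ℂ | ∃ t : ℝ, 0 < t ∧ t < Real.pi ∧ z = Complex.exp (t * Complex.I) * β}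

/-- A set of points on the unit circle is `k`-regular if every open semicircular
arc contains at least `k` of its elements. -/
def IsKRegular (k : ℕ) (S : Set ℂ) : Prop :=
  ∀ β : ℂ, ‖β‖ = 1 → k ≤ (S ∩ openSemicircle β).ncard

/-!
For a finite set `S` on the circle let `n_S(w)` be the number of points of `S` in the open
semicircle starting at `w`. Two facts drive the proof: `n_S(w) + n_S(-w) + #(S ∩ {w, -w}) = #S`,
and `{w | k ≤ n_S(w)}` is open.

(b) → (a). Let `Ψ = Π \ {γ}`. As `±γ ∉ Ψ` and a `(k - 1)`-regular set has at least `2k - 1`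
points, `n_Ψ(γ) + n_Ψ(-γ) ≥ 2k - 1`, so `n_Ψ ≥ k` near `γ` or near `-γ`. Put `β` just beside `-γ`,
on the side for which every semicircle missing both `γ` and `β` starts near that point; every
other semicircle gains a point.

(a) → (b). Only semicircles containing `β` can hold just `k - 1` points of `Π`. Their starting
angles, measured from `β`, form a compact subset of `(-π, 0)` with extreme points `m ≤ s`, and any
`γ ∈ Π` outside the angles `(m, s + π)` lies in none of them, so it can be removed. Suppose all
such `γ` had antipodes in `Π`. The count jumps just after `s`, so some `d ∈ Π` has angle `s + π`,
and then `±d ∈ Π` and the identity at `d` give `#Π ≥ 2k + 1`. On the other hand `Π` is covered by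
the two deficient semicircles at `m` and `s` and the candidates, whose antipodes lie in the closed
arc `[s, m + π]`, which gives `#Π ≤ 2k`.
-/

open Complex ComplexConjugate Set Filter Topology
open scoped Real

lemma Real.sin_pos_iff_of_mem_Icc {x : ℝ} (h₁ : -π ≤ x) (h₂ : x ≤ 2 * π) :
    0 < Real.sin x ↔ 0 < x ∧ x < π := by
  refine ⟨fun hx => ⟨?_, ?_⟩, fun hx => Real.sin_pos_of_pos_of_lt_pi hx.1 hx.2⟩
  · by_contra! h
    exact hx.not_ge (Real.sin_nonpos_of_nonpos_of_neg_pi_le h h₁)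
  · by_contra! h
    have := Real.sin_nonneg_of_nonneg_of_le_pi (x := x - π) (by linarith) (by linarith)
    rw [Real.sin_sub_pi] at this
    linarith

/-- Points of `Φ` strictly to the left of the line `ℝ • w`; for `‖w‖ = 1`, those in
`openSemicircle w`. -/
def arcCount (Φ : Finset ℂ) (w : ℂ) : ℕ :=
  (Φ.filter fun z => 0 < (z * conj w).im).card

def angleFrom (γ z : ℂ) : ℝ :=
  arg (z * conj γ)

section UnitCircle

variable {γ z w : ℂ}

lemma mul_conj_of_norm_eq_one (hγ : ‖γ‖ = 1) : γ * conj γ = 1 := by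
  simp [mul_conj', hγ]

lemma mul_exp_angleFrom (hγ : ‖γ‖ = 1) (hz : ‖z‖ = 1) :
    γ * exp (angleFrom γ z * I) = z := by
  have hu : ‖z * conj γ‖ = 1 := by simp [hz, hγ]
  have := norm_mul_exp_arg_mul_I (z * conj γ)
  rw [hu, ofReal_one, one_mul] at this
  rw [angleFrom, this, mul_comm, mul_assoc, mul_comm (conj γ), mul_conj_of_norm_eq_one hγ, mul_one]

lemma im_mul_exp_mul_conj (hγ : ‖γ‖ = 1) (a b : ℝ) :
    (γ * exp (a * I) * conj (γ * exp (b * I))).im = Real.sin (a - b) := by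
  have : γ * exp (a * I) * conj (γ * exp (b * I)) = exp ((a - b : ℝ) * I) := by
    rw [map_mul, ← exp_conj, map_mul, conj_ofReal, conj_I,
      show γ * exp (a * I) * (conj γ * exp (b * -I)) = γ * conj γ * exp (a * I + b * -I) by
        rw [exp_add]; ring,
      mul_conj_of_norm_eq_one hγ, one_mul]
    push_cast; ring_nf
  rw [this, exp_ofReal_mul_I_im]

lemma im_mul_conj_mul_exp (hγ : ‖γ‖ = 1) (t : ℝ) :
    (γ * conj (γ * exp (t * I))).im = -Real.sin t := by
  simpa using im_mul_exp_mul_conj hγ 0 t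

lemma im_mul_conj_eq_sin (hγ : ‖γ‖ = 1) (hz : ‖z‖ = 1) (hw : ‖w‖ = 1) :
    (z * conj w).im = Real.sin (angleFrom γ z - angleFrom γ w) := by
  conv_lhs => rw [← mul_exp_angleFrom hγ hz, ← mul_exp_angleFrom hγ hw]
  exact im_mul_exp_mul_conj hγ _ _

lemma angleFrom_self (hγ : ‖γ‖ = 1) : angleFrom γ γ = 0 := by
  rw [angleFrom, mul_conj_of_norm_eq_one hγ, arg_one]

lemma angleFrom_mem_Ioc : angleFrom γ z ∈ Ioc (-π) π :=
  ⟨neg_pi_lt_arg _, arg_le_pi _⟩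

lemma angleFrom_mul_exp (hγ : ‖γ‖ = 1) {θ : ℝ} (hθ : θ ∈ Ioc (-π) π) :
    angleFrom γ (γ * exp (θ * I)) = θ := by
  rw [angleFrom, mul_comm γ, mul_assoc, mul_conj_of_norm_eq_one hγ, mul_one, arg_exp_mul_I,
    toIocMod_eq_self]
  exact ⟨hθ.1, by linarith [hθ.2]⟩

lemma angleFrom_injOn (hγ : ‖γ‖ = 1) : InjOn (angleFrom γ) {z | ‖z‖ = 1} := by
  intro z hz w hw h
  rw [← mul_exp_angleFrom hγ hz, ← mul_exp_angleFrom hγ hw, h]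

lemma angleFrom_neg (hγ : ‖γ‖ = 1) (hz : ‖z‖ = 1) :
    angleFrom γ (-z) =
      if angleFrom γ z ≤ 0 then angleFrom γ z + π else angleFrom γ z - π := by
  obtain ⟨h₁, h₂⟩ := angleFrom_mem_Ioc (γ := γ) (z := z)
  have hneg (c : ℝ) (hc : exp (c * I) = -1) :
      -z = γ * exp ((angleFrom γ z + c : ℝ) * I) := by
    rw [ofReal_add, add_mul, exp_add, hc, ← mul_assoc, mul_exp_angleFrom hγ hz, mul_neg_one]
  split_ifs with h
  · rw [hneg π exp_pi_mul_I, angleFrom_mul_exp hγ ⟨by linarith, by linarith⟩]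
  · rw [hneg (-π) (by rw [ofReal_neg, neg_mul, exp_neg_pi_mul_I]),
      angleFrom_mul_exp hγ ⟨by linarith, by linarith⟩, sub_eq_add_neg]

end UnitCircle

section ArcCount

variable {Φ : Finset ℂ} {k : ℕ} {z w : ℂ}

lemma eq_or_eq_neg_of_im_mul_conj_eq_zero (hz : ‖z‖ = 1) (hw : ‖w‖ = 1)
    (h : (z * conj w).im = 0) : z = w ∨ z = -w := by
  set u := z * conj w
  have hzu : z = u * w := by
    rw [mul_assoc, mul_comm (conj w), mul_conj_of_norm_eq_one hw, mul_one]
  have hu : ‖u‖ = 1 := by simp [u, hz, hw]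
  have hure : u = (u.re : ℂ) := Complex.ext rfl (by simp [h])
  rw [hure, norm_real, Real.norm_eq_abs] at hu
  rcases (abs_eq zero_le_one).1 hu with h₁ | h₁
  · left; rw [hzu, hure, h₁, ofReal_one, one_mul]
  · right; rw [hzu, hure, h₁, ofReal_neg, ofReal_one, neg_one_mul]

lemma mem_openSemicircle_iff (hz : ‖z‖ = 1) (hw : ‖w‖ = 1) :
    z ∈ openSemicircle w ↔ 0 < (z * conj w).im := by
  have hsin := im_mul_conj_eq_sin hw hz hw
  rw [angleFrom_self hw, sub_zero] at hsin
  constructor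
  · rintro ⟨t, ht₀, htπ, rfl⟩
    rw [mul_assoc, mul_conj_of_norm_eq_one hw, mul_one, exp_ofReal_mul_I_im]
    exact Real.sin_pos_of_pos_of_lt_pi ht₀ htπ
  · intro h
    obtain ⟨h₁, h₂⟩ := angleFrom_mem_Ioc (γ := w) (z := z)
    rw [hsin, Real.sin_pos_iff_of_mem_Icc (by linarith) (by linarith)] at h
    exact ⟨angleFrom w z, h.1, h.2, by rw [mul_comm, mul_exp_angleFrom hw hz]⟩

lemma ncard_inter_openSemicircle (hΦ : ∀ z ∈ Φ, ‖z‖ = 1) (hw : ‖w‖ = 1) :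
    ((Φ : Set ℂ) ∩ openSemicircle w).ncard = arcCount Φ w := by
  rw [arcCount, ← Set.ncard_coe_finset, Finset.coe_filter]
  exact congrArg _ (Set.ext fun z => and_congr_right fun hzΦ =>
    mem_openSemicircle_iff (hΦ z hzΦ) hw)

lemma isKRegular_iff (hΦ : ∀ z ∈ Φ, ‖z‖ = 1) :
    IsKRegular k Φ ↔ ∀ w, ‖w‖ = 1 → k ≤ arcCount Φ w :=
  forall₂_congr fun _ hw => by rw [ncard_inter_openSemicircle hΦ hw]

lemma arcCount_insert {x : ℂ} (hx : x ∉ Φ) (w : ℂ) :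
    arcCount (insert x Φ) w = arcCount Φ w + if 0 < (x * conj w).im then 1 else 0 := by
  rw [arcCount, Finset.filter_insert]
  split_ifs with h
  · exact Finset.card_insert_of_notMem fun hx' => hx (Finset.mem_filter.1 hx').1
  · rfl

lemma arcCount_erase {γ : ℂ} (hγ : γ ∈ Φ) (w : ℂ) :
    arcCount (Φ.erase γ) w + (if 0 < (γ * conj w).im then 1 else 0) = arcCount Φ w := by
  rw [← arcCount_insert (Finset.notMem_erase γ Φ), Finset.insert_erase hγ]

lemma arcCount_add_arcCount_neg_add_card_inter (hΦ : ∀ z ∈ Φ, ‖z‖ = 1) (hw : ‖w‖ = 1) :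
    arcCount Φ w + arcCount Φ (-w) + (Φ ∩ {w, -w}).card = Φ.card := by
  have hneg : arcCount Φ (-w) = (Φ.filter fun z => (z * conj w).im < 0).card := by
    simp only [arcCount, map_neg, mul_neg, neg_im, neg_pos]
  have hzero : Φ ∩ {w, -w} = Φ.filter fun z => (z * conj w).im = 0 := by
    ext z
    simp only [Finset.mem_inter, Finset.mem_insert, Finset.mem_singleton, Finset.mem_filter]
    refine and_congr_right fun hzΦ => ⟨?_, eq_or_eq_neg_of_im_mul_conj_eq_zero (hΦ z hzΦ) hw⟩
    rintro (rfl | rfl) <;> simp [mul_conj_of_norm_eq_one hw]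
  rw [arcCount, hneg, hzero, ← Finset.card_union_of_disjoint, ← Finset.card_union_of_disjoint]
  · congr 1
    ext z
    simp only [Finset.mem_union, Finset.mem_filter, ← and_or_left, and_iff_left_iff_imp]
    intro
    have := lt_trichotomy (z * conj w).im 0
    tauto
  all_goals
    simp only [Finset.disjoint_left, Finset.mem_union, Finset.mem_filter]
    intro z h₁ h₂
    grind

lemma two_mul_add_one_le_card (hΦ : ∀ z ∈ Φ, ‖z‖ = 1) (hk : 0 < k)
    (hreg : ∀ w, ‖w‖ = 1 → k ≤ arcCount Φ w) : 2 * k + 1 ≤ Φ.card := by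
  obtain ⟨p, hp⟩ : Φ.Nonempty := by
    rw [← Finset.card_pos]
    exact hk.trans_le ((hreg 1 norm_one).trans (Finset.card_filter_le _ _))
  have hp₁ := hΦ p hp
  have := arcCount_add_arcCount_neg_add_card_inter hΦ hp₁
  have := hreg p hp₁
  have := hreg (-p) (by rwa [norm_neg])
  have : 0 < (Φ ∩ {p, -p}).card := Finset.card_pos.2 ⟨p, by simp [hp]⟩
  omega

lemma isOpen_setOf_le_arcCount (Φ : Finset ℂ) (k : ℕ) : IsOpen {w | k ≤ arcCount Φ w} := by
  refine isOpen_iff_mem_nhds.2 fun w hw => ?_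
  have hcont (z : ℂ) : Continuous fun v => (z * conj v).im :=
    continuous_im.comp (continuous_const.mul continuous_conj)
  have : ∀ᶠ v in 𝓝 w, ∀ z ∈ Φ.filter fun z => 0 < (z * conj w).im, 0 < (z * conj v).im :=
    (Finset.eventually_all _).2 fun z hz =>
      (hcont z).continuousAt.eventually_const_lt (Finset.mem_filter.1 hz).2
  filter_upwards [this] with v hv
  exact hw.trans (Finset.card_le_card fun z hz =>
    Finset.mem_filter.2 ⟨(Finset.mem_filter.1 hz).1, hv z hz⟩)

end ArcCount

section InsertErase

variable {Φ Ψ : Finset ℂ} {k : ℕ} {β γ : ℂ}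

lemma le_arcCount_insert_insert (hreg : ∀ w, ‖w‖ = 1 → k - 1 ≤ arcCount Ψ w) (hγ : γ ∉ Ψ)
    (hβ : β ∉ insert γ Ψ)
    (hmiss : ∀ w, ‖w‖ = 1 → (γ * conj w).im ≤ 0 → (β * conj w).im ≤ 0 → k ≤ arcCount Ψ w)
    (w : ℂ) (hw : ‖w‖ = 1) : k ≤ arcCount (insert β (insert γ Ψ)) w := by
  rw [arcCount_insert hβ, arcCount_insert hγ]
  have := hreg w hw
  split_ifs with hγw hβw hβw
  · omega
  · omega
  · omega
  · exact (hmiss w hw (not_lt.1 hγw) (not_lt.1 hβw)).trans (by omega)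

lemma le_arcCount_erase (hreg : ∀ w, ‖w‖ = 1 → k ≤ arcCount (insert β Φ) w) (hβ : β ∉ Φ)
    (hγ : γ ∈ Φ)
    (hhit : ∀ w, ‖w‖ = 1 → 0 < (γ * conj w).im → 0 < (β * conj w).im → k ≤ arcCount Φ w)
    (w : ℂ) (hw : ‖w‖ = 1) : k - 1 ≤ arcCount (Φ.erase γ) w := by
  have hins := hreg w hw
  have herase := arcCount_erase hγ w
  rw [arcCount_insert hβ] at hins
  split_ifs at hins herase with hβw hγw hγw
  · have := hhit w hw hγw hβw
    omega
  all_goals omega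

end InsertErase

lemma exists_forall_abs_sub_le_mul_exp_mem {γ : ℂ} {a : ℝ} {G : Set ℂ}
    (hG : G ∈ 𝓝 (γ * exp (a * I))) :
    ∃ ε > 0, ∀ ψ : ℝ, |ψ - a| ≤ ε → γ * exp (ψ * I) ∈ G := by
  have hc : Continuous fun ψ : ℝ => γ * exp (ψ * I) := by fun_prop
  obtain ⟨δ, hδ, hball⟩ := Metric.mem_nhds_iff.1 (hc.continuousAt.preimage_mem_nhds hG)
  refine ⟨δ / 2, by positivity, fun ψ hψ => hball ?_⟩
  rw [Metric.mem_ball, Real.dist_eq]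
  linarith

lemma exists_mul_exp_of_im_mul_conj_nonpos {γ w : ℂ} (hγ : ‖γ‖ = 1) (hw : ‖w‖ = 1) {θ : ℝ}
    (hγw : (γ * conj w).im ≤ 0) (hθw : (γ * exp (θ * I) * conj w).im ≤ 0) :
    ∃ ψ, 0 ≤ ψ ∧ ψ ≤ π ∧ Real.sin (θ - ψ) ≤ 0 ∧ w = γ * exp (ψ * I) := by
  set ψ := angleFrom γ w
  have hw' : γ * exp (ψ * I) = w := mul_exp_angleFrom hγ hw
  obtain ⟨h₁, h₂⟩ := angleFrom_mem_Ioc (γ := γ) (z := w)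
  have hsinθ := im_mul_exp_mul_conj hγ θ ψ
  rw [hw'] at hsinθ
  refine ⟨ψ, ?_, h₂, hsinθ ▸ hθw, hw'.symm⟩
  by_contra! hψ
  have := im_mul_conj_mul_exp hγ ψ
  rw [hw'] at this
  linarith [Real.sin_neg_of_neg_of_neg_pi_lt hψ h₁]

/-- `β` is taken close to `-γ`, on the side for which every semicircle missing both `γ` and `β`
starts close to the point `±γ` near which `Ψ` is `k`-rich. -/
lemma exists_forall_im_nonpos_imp_le_arcCount {Φ Ψ : Finset ℂ} {k : ℕ} {γ : ℂ} (hγ : ‖γ‖ = 1)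
    (hγΦ : -γ ∉ Φ) (h : k ≤ arcCount Ψ (-γ) ∨ k ≤ arcCount Ψ γ) :
    ∃ β, ‖β‖ = 1 ∧ β ∉ Φ ∧
      ∀ w, ‖w‖ = 1 → (γ * conj w).im ≤ 0 → (β * conj w).im ≤ 0 → k ≤ arcCount Ψ w := by
  have hneg : -γ = γ * exp (π * I) := by rw [exp_pi_mul_I, mul_neg_one]
  have hoff : (↑Φ)ᶜ ∈ 𝓝 (γ * exp (π * I)) :=
    hneg ▸ Φ.finite_toSet.isClosed.isOpen_compl.mem_nhds hγΦ
  have hrich {p : ℂ} (hp : k ≤ arcCount Ψ p) : {v | k ≤ arcCount Ψ v} ∈ 𝓝 p :=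
    (isOpen_setOf_le_arcCount Ψ k).mem_nhds hp
  rcases h with h | h
  · obtain ⟨ε, hε, hG⟩ :=
      exists_forall_abs_sub_le_mul_exp_mem (inter_mem hoff (hneg ▸ hrich h))
    refine ⟨γ * exp ((π - ε : ℝ) * I), by rw [norm_mul, hγ, one_mul, norm_exp_ofReal_mul_I],
      (hG _ (by rw [sub_sub_cancel_left, abs_neg, abs_of_pos hε])).1, fun w hw hγw hβw => ?_⟩
    obtain ⟨ψ, hψ₀, hψπ, hsin, rfl⟩ := exists_mul_exp_of_im_mul_conj_nonpos hγ hw hγw hβw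
    have : π - ε ≤ ψ := by
      by_contra! hlt
      exact hsin.not_gt (Real.sin_pos_of_pos_of_lt_pi (by linarith) (by linarith))
    exact (hG ψ (abs_le.2 ⟨by linarith, by linarith⟩)).2
  · obtain ⟨ε₁, hε₁, hG₁⟩ := exists_forall_abs_sub_le_mul_exp_mem hoff
    obtain ⟨ε₂, hε₂, hG₂⟩ := exists_forall_abs_sub_le_mul_exp_mem (γ := γ) (a := 0)
      (by rw [ofReal_zero, zero_mul, exp_zero, mul_one]; exact hrich h)
    set ε := min ε₁ ε₂
    have hε : 0 < ε := lt_min hε₁ hε₂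
    refine ⟨γ * exp ((π + ε : ℝ) * I), by rw [norm_mul, hγ, one_mul, norm_exp_ofReal_mul_I],
      hG₁ _ (by rw [add_sub_cancel_left, abs_of_pos hε]; exact min_le_left _ _),
      fun w hw hγw hβw => ?_⟩
    obtain ⟨ψ, hψ₀, hψπ, hsin, rfl⟩ := exists_mul_exp_of_im_mul_conj_nonpos hγ hw hγw hβw
    have : ψ ≤ ε := by
      by_contra! hlt
      exact hsin.not_gt (Real.sin_pos_of_pos_of_lt_pi (by linarith) (by linarith))
    exact hG₂ ψ (by rw [sub_zero, abs_of_nonneg hψ₀]; exact this.trans (min_le_right _ _))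

lemma exists_insert_of_erase {Φ : Finset ℂ} {k : ℕ} {γ : ℂ} (hk : 1 < k)
    (hΦ : ∀ z ∈ Φ, ‖z‖ = 1) (hγ : γ ∈ Φ) (hγn : -γ ∉ Φ)
    (hreg : ∀ w, ‖w‖ = 1 → k - 1 ≤ arcCount (Φ.erase γ) w) :
    ∃ β, ‖β‖ = 1 ∧ β ∉ Φ ∧ ∀ w, ‖w‖ = 1 → k ≤ arcCount (insert β Φ) w := by
  have hΨ : ∀ z ∈ Φ.erase γ, ‖z‖ = 1 := fun z hz => hΦ z (Finset.mem_of_mem_erase hz)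
  have hγ₁ := hΦ γ hγ
  have hsum := arcCount_add_arcCount_neg_add_card_inter hΨ hγ₁
  have hempty : Φ.erase γ ∩ {γ, -γ} = ∅ := by
    ext z
    simp only [Finset.mem_inter, Finset.mem_erase, Finset.mem_insert, Finset.mem_singleton,
      Finset.notMem_empty, iff_false]
    rintro ⟨⟨hzγ, hz⟩, rfl | rfl⟩
    exacts [hzγ rfl, hγn hz]
  have hcard := two_mul_add_one_le_card hΨ (by omega) hreg
  rw [hempty, Finset.card_empty] at hsum
  obtain ⟨β, hβ, hβΦ, hmiss⟩ :=
    exists_forall_im_nonpos_imp_le_arcCount (Ψ := Φ.erase γ) (k := k) hγ₁ hγn (by omega)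
  refine ⟨β, hβ, hβΦ, ?_⟩
  rw [← Finset.insert_erase hγ]
  exact le_arcCount_insert_insert hreg (Finset.notMem_erase γ Φ)
    (by rwa [Finset.insert_erase hγ]) hmiss

lemma eventually_filter_Ioo_subset_filter_Ioc {α : Type*} (s : Finset α) (f : α → ℝ)
    (a L : ℝ) :
    ∀ᶠ t in 𝓝[>] a, s.filter (fun z => f z ∈ Ioo t (t + L)) ⊆
      s.filter (fun z => f z ∈ Ioc a (a + L)) := by
  have hfar : ∀ᶠ t in 𝓝 a, ∀ z ∈ s, a + L < f z → t + L < f z :=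
    (s.eventually_all).2 fun z _ => by
      by_cases h : a + L < f z
      · filter_upwards [eventually_lt_nhds (show a < f z - L by linarith)] with t ht _
        linarith
      · exact .of_forall fun _ h' => absurd h' h
  filter_upwards [self_mem_nhdsWithin, nhdsWithin_le_nhds hfar] with t (hat : a < t) ht z hz
  simp only [Finset.mem_filter, mem_Ioo, mem_Ioc] at hz ⊢
  refine ⟨hz.1, by linarith [hz.2.1], ?_⟩
  by_contra! h
  linarith [ht z hz.1 h, hz.2.2]

lemma card_filter_Icc_le_card_filter_Ioo_add_two {α : Type*} {Φ : Finset α} {f : α → ℝ}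
    (hf : InjOn f Φ) (a b : ℝ) :
    (Φ.filter fun z => f z ∈ Icc a b).card ≤ (Φ.filter fun z => f z ∈ Ioo a b).card + 2 := by
  have hsingle (c : ℝ) : (Φ.filter fun z => f z = c).card ≤ 1 :=
    Finset.card_le_one.2 fun x hx y hy =>
      hf (Finset.mem_filter.1 hx).1 (Finset.mem_filter.1 hy).1
        ((Finset.mem_filter.1 hx).2.trans (Finset.mem_filter.1 hy).2.symm)
  have hsub : Φ.filter (fun z => f z ∈ Icc a b) ⊆
      Φ.filter (fun z => f z = a) ∪ Φ.filter (fun z => f z = b) ∪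
        Φ.filter (fun z => f z ∈ Ioo a b) := by
    intro z hz
    simp only [Finset.mem_union, Finset.mem_filter, mem_Icc, mem_Ioo] at hz ⊢
    rcases hz.2.1.eq_or_lt with h | h
    · exact Or.inl (Or.inl ⟨hz.1, h.symm⟩)
    rcases hz.2.2.eq_or_lt with h' | h'
    · exact Or.inl (Or.inr ⟨hz.1, h'⟩)
    · exact Or.inr ⟨hz.1, h, h'⟩
  calc _ ≤ _ := Finset.card_le_card hsub
    _ ≤ _ := Finset.card_union_le _ _
    _ ≤ _ := by grw [Finset.card_union_le, hsingle a, hsingle b]; omega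

lemma card_le_two_mul_add_two_of_antipodal {α : Type*} [InvolutiveNeg α] {Φ : Finset α}
    {f : α → ℝ} (hf : InjOn f Φ) {k : ℕ} {m s : ℝ} (hms : m ≤ s) (hsm : s < m + π)
    (hm : (Φ.filter fun z => f z ∈ Ioo m (m + π)).card ≤ k)
    (hs : (Φ.filter fun z => f z ∈ Ioo s (s + π)).card ≤ k)
    (hanti : ∀ z ∈ Φ, f z ≤ m ∨ s + π ≤ f z → -z ∈ Φ ∧ f (-z) ∈ Icc s (m + π)) :
    Φ.card ≤ 2 * k + 2 := by
  set P := Φ.filter fun z => f z ≤ m ∨ s + π ≤ f z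
  set Am := Φ.filter fun z => f z ∈ Ioo m (m + π)
  set As := Φ.filter fun z => f z ∈ Ioo s (s + π)
  have hcover : Φ ⊆ P ∪ (Am ∪ As) := by
    intro z hz
    simp only [Finset.mem_union, Finset.mem_filter, mem_Ioo, P, Am, As]
    rcases le_or_gt (f z) m with h₁ | h₁
    · exact Or.inl ⟨hz, Or.inl h₁⟩
    rcases le_or_gt (s + π) (f z) with h₂ | h₂
    · exact Or.inl ⟨hz, Or.inr h₂⟩
    rcases lt_or_ge (f z) (m + π) with h₃ | h₃
    · exact Or.inr (Or.inl ⟨hz, h₁, h₃⟩)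
    · exact Or.inr (Or.inr ⟨hz, by linarith, h₂⟩)
  have hoverlap : Φ.filter (fun z => f z ∈ Ioo s (m + π)) ⊆ Am ∩ As := fun z hz => by
    simp only [Finset.mem_inter, Finset.mem_filter, mem_Ioo, Am, As] at hz ⊢
    exact ⟨⟨hz.1, by linarith, hz.2.2⟩, ⟨hz.1, hz.2.1, by linarith⟩⟩
  have hP : P.card ≤ (Φ.filter fun z => f z ∈ Icc s (m + π)).card :=
    Finset.card_le_card_of_injOn (fun z => -z)
      (fun z hz => Finset.mem_filter.2 (hanti z (Finset.mem_filter.1 hz).1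
        (Finset.mem_filter.1 hz).2))
      neg_injective.injOn
  have := Finset.card_le_card hcover
  have := Finset.card_union_le P (Am ∪ As)
  have := Finset.card_union_add_card_inter Am As
  have := Finset.card_le_card hoverlap
  have := card_filter_Icc_le_card_filter_Ioo_add_two hf s (m + π)
  omega

lemma im_mul_conj_mul_exp_pos_iff {β z : ℂ} (hβ : ‖β‖ = 1) (hz : ‖z‖ = 1) {t : ℝ}
    (ht : t ∈ Icc (-π) 0) :
    0 < (z * conj (β * exp (t * I))).im ↔ angleFrom β z ∈ Ioo t (t + π) := by
  obtain ⟨h₁, h₂⟩ := angleFrom_mem_Ioc (γ := β) (z := z)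
  conv_lhs => rw [← mul_exp_angleFrom hβ hz]
  rw [im_mul_exp_mul_conj hβ, Real.sin_pos_iff_of_mem_Icc (by linarith [ht.2])
    (by linarith [ht.1]), mem_Ioo]
  constructor <;> rintro ⟨h₃, h₄⟩ <;> constructor <;> linarith

lemma arcCount_mul_exp {Φ : Finset ℂ} (hΦ : ∀ z ∈ Φ, ‖z‖ = 1) {β : ℂ} (hβ : ‖β‖ = 1) {t : ℝ}
    (ht : t ∈ Icc (-π) 0) :
    arcCount Φ (β * exp (t * I)) = (Φ.filter fun z => angleFrom β z ∈ Ioo t (t + π)).card := by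
  rw [arcCount, Finset.filter_congr fun z hz => im_mul_conj_mul_exp_pos_iff hβ (hΦ z hz) ht]

/-- The semicircles starting at `β * exp (t * I)` with `t ∈ [-π, 0]` are those whose closure
contains `β`. -/
def deficientAngles (Φ : Finset ℂ) (β : ℂ) (k : ℕ) : Set ℝ :=
  {t ∈ Icc (-π) 0 | arcCount Φ (β * exp (t * I)) < k}

lemma isCompact_deficientAngles (Φ : Finset ℂ) (β : ℂ) (k : ℕ) :
    IsCompact (deficientAngles Φ β k) := by
  have hcont : Continuous fun t : ℝ => β * exp (t * I) := by fun_prop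
  have hclosed : IsClosed {t : ℝ | arcCount Φ (β * exp (t * I)) < k} := by
    convert ((isOpen_setOf_le_arcCount Φ k).preimage hcont).isClosed_compl using 1
    ext t
    simp
  exact isCompact_Icc.inter_right hclosed

section Forward

variable {Φ : Finset ℂ} {k : ℕ} {β : ℂ}

lemma le_arcCount_of_im_nonpos (hβΦ : β ∉ Φ)
    (hreg : ∀ w, ‖w‖ = 1 → k ≤ arcCount (insert β Φ) w) {w : ℂ} (hw : ‖w‖ = 1)
    (hβw : (β * conj w).im ≤ 0) : k ≤ arcCount Φ w := by
  have := hreg w hw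
  rwa [arcCount_insert hβΦ, if_neg (not_lt.2 hβw), add_zero] at this

lemma deficientAngles_subset_Ioo (hβ : ‖β‖ = 1) (hβΦ : β ∉ Φ)
    (hreg : ∀ w, ‖w‖ = 1 → k ≤ arcCount (insert β Φ) w) :
    deficientAngles Φ β k ⊆ Ioo (-π) 0 := by
  rintro t ⟨⟨h₁, h₂⟩, ht⟩
  have hunit : ‖β * exp (t * I)‖ = 1 := by rw [norm_mul, hβ, one_mul, norm_exp_ofReal_mul_I]
  have hβw (h : Real.sin t = 0) : (β * conj (β * exp (t * I))).im ≤ 0 := by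
    rw [im_mul_conj_mul_exp hβ, h, neg_zero]
  refine ⟨h₁.lt_of_ne ?_, h₂.lt_of_ne ?_⟩ <;> rintro rfl <;>
    refine ht.not_ge (le_arcCount_of_im_nonpos hβΦ hreg hunit (hβw ?_))
  exacts [by rw [Real.sin_neg, Real.sin_pi, neg_zero], Real.sin_zero]

lemma exists_angleFrom_eq_add_pi (hΦ : ∀ z ∈ Φ, ‖z‖ = 1) (hβ : ‖β‖ = 1) (hβΦ : β ∉ Φ)
    (hreg : ∀ w, ‖w‖ = 1 → k ≤ arcCount (insert β Φ) w) {s : ℝ}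
    (hs : IsGreatest (deficientAngles Φ β k) s) : ∃ d ∈ Φ, angleFrom β d = s + π := by
  have hs₀ : s < 0 := (deficientAngles_subset_Ioo hβ hβΦ hreg hs.1).2
  obtain ⟨t, ⟨hst, ht₀⟩, hsub⟩ := (Filter.Eventually.and (Ioo_mem_nhdsGT hs₀)
    (eventually_filter_Ioo_subset_filter_Ioc Φ (angleFrom β) s π)).exists
  have ht : t ∈ Icc (-π) 0 := ⟨by linarith [hs.1.1.1], ht₀.le⟩
  have hkt : k ≤ arcCount Φ (β * exp (t * I)) := by
    by_contra h
    exact (hs.2 ⟨ht, not_le.1 h⟩).not_gt hst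
  have hks := hs.1.2
  rw [arcCount_mul_exp hΦ hβ ht] at hkt
  rw [arcCount_mul_exp hΦ hβ hs.1.1] at hks
  by_contra! hd
  rw [Finset.filter_congr fun z hz => (show angleFrom β z ∈ Ioc s (s + π) ↔
    angleFrom β z ∈ Ioo s (s + π) from ⟨fun h => ⟨h.1, h.2.lt_of_ne (hd z hz)⟩,
      fun h => ⟨h.1, h.2.le⟩⟩)] at hsub
  have := Finset.card_le_card hsub
  omega

lemma two_mul_add_one_le_card_of_arcCount_lt (hΦ : ∀ z ∈ Φ, ‖z‖ = 1) (hβΦ : β ∉ Φ)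
    (hreg : ∀ w, ‖w‖ = 1 → k ≤ arcCount (insert β Φ) w) {w : ℂ} (hw : ‖w‖ = 1)
    (hlt : arcCount Φ w < k) (hwΦ : w ∈ Φ) (hnwΦ : -w ∈ Φ) : 2 * k + 1 ≤ Φ.card := by
  have h₁ := hreg w hw
  rw [arcCount_insert hβΦ] at h₁
  have hβw : 0 < (β * conj w).im := by
    by_contra h
    rw [if_neg h] at h₁
    omega
  rw [if_pos hβw] at h₁
  have h₂ := le_arcCount_of_im_nonpos hβΦ hreg (w := -w) (by rwa [norm_neg])
    (by rw [map_neg, mul_neg, neg_im]; linarith)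
  have hsum := arcCount_add_arcCount_neg_add_card_inter hΦ hw
  have hne : w ≠ -w := fun h => by
    rw [CharZero.eq_neg_self_iff] at h
    simp [h] at hw
  rw [Finset.inter_eq_right.2 (Finset.insert_subset hwΦ (Finset.singleton_subset_iff.2 hnwΦ)),
    Finset.card_pair hne] at hsum
  omega

lemma angleFrom_neg_mem_Icc (hβ : ‖β‖ = 1) {z : ℂ} (hz : ‖z‖ = 1) {m s : ℝ}
    (hm : m ∈ Ioo (-π) 0) (hs : s ∈ Ioo (-π) 0)
    (h : angleFrom β z ≤ m ∨ s + π ≤ angleFrom β z) : angleFrom β (-z) ∈ Icc s (m + π) := by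
  obtain ⟨h₁, h₂⟩ := angleFrom_mem_Ioc (γ := β) (z := z)
  rw [angleFrom_neg hβ hz]
  split_ifs <;> constructor <;> rcases h with h | h <;> linarith [hm.1, hm.2, hs.1, hs.2]

lemma exists_neg_notMem_forall_angleFrom_notMem_Ioo (hΦ : ∀ z ∈ Φ, ‖z‖ = 1) {α : ℂ}
    (hα : α ∈ Φ) (hαn : -α ∉ Φ) (hβ : ‖β‖ = 1) (hβΦ : β ∉ Φ)
    (hreg : ∀ w, ‖w‖ = 1 → k ≤ arcCount (insert β Φ) w) :
    ∃ γ ∈ Φ, -γ ∉ Φ ∧ ∀ t ∈ deficientAngles Φ β k, angleFrom β γ ∉ Ioo t (t + π) := by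
  rcases (deficientAngles Φ β k).eq_empty_or_nonempty with hW | hW
  · exact ⟨α, hα, hαn, by simp [hW]⟩
  obtain ⟨m, hm⟩ := (isCompact_deficientAngles Φ β k).exists_isLeast hW
  obtain ⟨s, hs⟩ := (isCompact_deficientAngles Φ β k).exists_isGreatest hW
  have hm' := deficientAngles_subset_Ioo hβ hβΦ hreg hm.1
  have hs' := deficientAngles_subset_Ioo hβ hβΦ hreg hs.1
  by_contra! hall
  have hanti : ∀ z ∈ Φ, angleFrom β z ≤ m ∨ s + π ≤ angleFrom β z →
      -z ∈ Φ ∧ angleFrom β (-z) ∈ Icc s (m + π) := by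
    intro z hz hout
    refine ⟨by_contra fun hnz => ?_, ?_⟩
    · obtain ⟨t, ht, h₁, h₂⟩ := hall z hz hnz
      have := hm.2 ht
      have := hs.2 ht
      rcases hout with h | h <;> linarith
    · exact angleFrom_neg_mem_Icc hβ (hΦ z hz) hm' hs' hout
  obtain ⟨d, hd, hφd⟩ := exists_angleFrom_eq_add_pi hΦ hβ hβΦ hreg hs
  have hws : -d = β * exp (s * I) := by
    have := mul_exp_angleFrom (z := -d) hβ (by rw [norm_neg]; exact hΦ d hd)
    rwa [angleFrom_neg hβ (hΦ d hd), if_neg (by linarith [hs'.1]), hφd, add_sub_cancel_right,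
      eq_comm] at this
  have hlow := two_mul_add_one_le_card_of_arcCount_lt hΦ hβΦ hreg (w := -d)
    (by rw [norm_neg]; exact hΦ d hd) (hws ▸ hs.1.2) (hanti d hd (Or.inr hφd.ge)).1
    (by rwa [neg_neg])
  have hdef {t : ℝ} (ht : t ∈ deficientAngles Φ β k) :
      (Φ.filter fun z => angleFrom β z ∈ Ioo t (t + π)).card ≤ k - 1 := by
    have := ht.2
    rw [arcCount_mul_exp hΦ hβ ht.1] at this
    omega
  have hup := card_le_two_mul_add_two_of_antipodal
    ((angleFrom_injOn hβ).mono fun z hz => hΦ z hz) (hm.2 hs.1) (by linarith [hm'.1, hs'.2])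
    (hdef hm.1) (hdef hs.1) hanti
  have := hs.1.2
  omega

lemma exists_erase_of_insert (hΦ : ∀ z ∈ Φ, ‖z‖ = 1) {α : ℂ} (hα : α ∈ Φ) (hαn : -α ∉ Φ)
    (hβ : ‖β‖ = 1) (hβΦ : β ∉ Φ) (hreg : ∀ w, ‖w‖ = 1 → k ≤ arcCount (insert β Φ) w) :
    ∃ γ ∈ Φ, -γ ∉ Φ ∧ ∀ w, ‖w‖ = 1 → k - 1 ≤ arcCount (Φ.erase γ) w := by
  obtain ⟨γ, hγ, hγn, havoid⟩ :=
    exists_neg_notMem_forall_angleFrom_notMem_Ioo hΦ hα hαn hβ hβΦ hreg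
  refine ⟨γ, hγ, hγn, le_arcCount_erase hreg hβΦ hγ fun w hw hγw hβw => ?_⟩
  set t := angleFrom β w
  have hwt : β * exp (t * I) = w := mul_exp_angleFrom hβ hw
  obtain ⟨h₁, h₂⟩ := angleFrom_mem_Ioc (γ := β) (z := w)
  rw [← hwt, im_mul_conj_mul_exp hβ, neg_pos] at hβw
  have ht : t ∈ Icc (-π) 0 := ⟨h₁.le, not_lt.1 fun h => hβw.not_ge
    (Real.sin_nonneg_of_nonneg_of_le_pi h.le h₂)⟩
  by_contra! hlt
  rw [← hwt] at hlt hγw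
  exact havoid t ⟨ht, hlt⟩ ((im_mul_conj_mul_exp_pos_iff hβ (hΦ γ hγ) ht).1 hγw)

end Forward

/-- For a finite subset of the unit circle with a non-antipodal point,
one can add a point to make it k-regular iff one can delete a non-antipodal point to
make it (k-1)-regular. -/
theorem stmt15 {k : ℕ} (hk : 1 < k) (Φ : Finset ℂ)
    (hΦ : ∀ z ∈ Φ, ‖z‖ = 1)
    (hna : ∃ α ∈ Φ, -α ∉ Φ) :
    (∃ β : ℂ, ‖β‖ = 1 ∧ β ∉ Φ ∧ IsKRegular k ↑(insert β Φ)) ↔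
    (∃ γ ∈ Φ, -γ ∉ Φ ∧ IsKRegular (k - 1) ↑(Φ.erase γ)) := by
  have hins {β : ℂ} (hβ : ‖β‖ = 1) : ∀ z ∈ insert β Φ, ‖z‖ = 1 :=
    Finset.forall_mem_insert _ _ _ |>.2 ⟨hβ, hΦ⟩
  have hera (γ : ℂ) : ∀ z ∈ Φ.erase γ, ‖z‖ = 1 := fun z hz => hΦ z (Finset.mem_of_mem_erase hz)
  constructor
  · rintro ⟨β, hβ, hβΦ, hreg⟩
    obtain ⟨α, hα, hαn⟩ := hna
    obtain ⟨γ, hγ, hγn, hreg'⟩ :=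
      exists_erase_of_insert hΦ hα hαn hβ hβΦ ((isKRegular_iff (hins hβ)).1 hreg)
    exact ⟨γ, hγ, hγn, (isKRegular_iff (hera γ)).2 hreg'⟩
  · rintro ⟨γ, hγ, hγn, hreg⟩
    obtain ⟨β, hβ, hβΦ, hreg'⟩ :=
      exists_insert_of_erase hk hΦ hγ hγn ((isKRegular_iff (hera γ)).1 hreg)
    exact ⟨β, hβ, hβΦ, (isKRegular_iff (hins hβ)).2 hreg'⟩
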